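/- arXiv:2209.08476 — 15 statements merged into one kernel-verified Lean document; each statement's English description precedes it below -/
import Mathlib

section
/- (Lemma 1, attacker's best response.) Let p_A ∈ (0,1), q_A > 0, β ∈ (0,1], γ ∈ [0,1], and define f(α) = (p_A(1−γ)² + q_A α² + γ²)·(β/(α+β))² for α ∈ (0,1]. Let ᾱ = (p_A(1−γ)² + γ²)/(q_A β). If ᾱ < 1, then f(ᾱ) ≤ f(α) for all α ∈ (0,1]; if ᾱ ≥ 1, then f(1) ≤ f(α) for all α ∈ (0,1]. -/
/-- Lemma 1, attacker's best response. -/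
theorem attacker_best_response (pA qA β γ : ℝ)
    (hpA : pA ∈ Set.Ioo (0:ℝ) 1) (hqA : 0 < qA)
    (hβ : β ∈ Set.Ioc (0:ℝ) 1) (hγ : γ ∈ Set.Icc (0:ℝ) 1)
    (f : ℝ → ℝ)
    (hf : ∀ α, f α = (pA * (1 - γ) ^ 2 + qA * α ^ 2 + γ ^ 2) * (β / (α + β)) ^ 2)
    (ᾱ : ℝ) (hᾱ : ᾱ = (pA * (1 - γ) ^ 2 + γ ^ 2) / (qA * β)) :
    (ᾱ < 1 → ∀ α ∈ Set.Ioc (0:ℝ) 1, f ᾱ ≤ f α) ∧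
    (1 ≤ ᾱ → ∀ α ∈ Set.Ioc (0:ℝ) 1, f 1 ≤ f α) := by
  obtain ⟨hp0, hp1⟩ := hpA
  obtain ⟨hβ0, hβ1⟩ := hβ
  obtain ⟨hγ0, hγ1⟩ := hγ
  have hᾱ0 : 0 ≤ ᾱ := by rw [hᾱ]; positivity
  have hcval : pA * (1 - γ) ^ 2 + γ ^ 2 = qA * β * ᾱ := by
    rw [hᾱ]; field_simp
  -- general reduction lemma
  have key : ∀ A B x y : ℝ, 0 < x → 0 < y → A * y ^ 2 ≤ B * x ^ 2 →
      A * (β / x) ^ 2 ≤ B * (β / y) ^ 2 := by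
    intro A B x y hx hy h
    rw [div_pow, div_pow, ← mul_div_assoc, ← mul_div_assoc,
      div_le_div_iff₀ (by positivity) (by positivity)]
    nlinarith [mul_le_mul_of_nonneg_left h (sq_nonneg β)]
  constructor
  · intro _ α hα
    obtain ⟨hα0, hα1⟩ := hα
    rw [hf, hf]
    apply key _ _ _ _ (by linarith) (by linarith)
    nlinarith [mul_nonneg (mul_nonneg (mul_nonneg hqA.le hβ0.le)
      (by linarith : (0:ℝ) ≤ ᾱ + β)) (sq_nonneg (ᾱ - α)), hcval]
  · intro h1 α hα
    obtain ⟨hα0, hα1⟩ := hα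
    rw [hf, hf]
    apply key _ _ _ _ (by linarith) (by linarith)
    nlinarith [mul_nonneg (mul_nonneg (mul_nonneg hqA.le hβ0.le)
        (mul_nonneg (by linarith : (0:ℝ) ≤ 1 - α) (by linarith : (0:ℝ) ≤ ᾱ - 1)))
        (by linarith : (0:ℝ) ≤ 1 + α + 2 * β),
      mul_nonneg (mul_nonneg (mul_nonneg hqA.le hβ0.le) (sq_nonneg (1 - α)))
        (by linarith : (0:ℝ) ≤ 1 + β), hcval]
end

section
/- (Lemma 1, defender's best response.) Let p_D ∈ (0,1), q_D > 0, α ∈ (0,1], γ ∈ [0,1], and define g(β) = (p_D(1−γ)² + q_D β² + γ²)·(α/(α+β))² for β ∈ (0,1]. Let β̄ = (p_D(1−γ)² + γ²)/(q_D α). If β̄ < 1, then g(β̄) ≤ g(β) for all β ∈ (0,1]; if β̄ ≥ 1, then g(1) ≤ g(β) for all β ∈ (0,1]. -/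
/-!
Writing the constant term of the cost as `q α βbar`, the cost completes to a square: it equals a
constant plus a nonnegative multiple of `((βbar - β) / (α + β))²`. That ratio vanishes at
`β = βbar`, and for `βbar ≥ 1` it equals `(α + βbar) / (α + β) - 1`, which is nonnegative and
antitone on `(0, 1]`, hence smallest at `β = 1`.
-/

lemma mul_add_sq_mul_div_sq_eq (q α b β : ℝ) (hβ : α + β ≠ 0) (hb : α + b ≠ 0) :
    (q * α * b + q * β ^ 2) * (α / (α + β)) ^ 2 =
      q * α ^ 2 * b / (α + b) + q * α ^ 3 / (α + b) * ((b - β) / (α + β)) ^ 2 := by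
  field_simp
  ring

lemma sq_sub_div_add_le_of_le {α b β β' : ℝ} (hβ : 0 < α + β) (hββ' : β ≤ β') (hβ'b : β' ≤ b) :
    ((b - β') / (α + β')) ^ 2 ≤ ((b - β) / (α + β)) ^ 2 := by
  have hβ' : 0 < α + β' := by linarith
  have hrat : ∀ x, 0 < α + x → (b - x) / (α + x) = (α + b) / (α + x) - 1 := by
    intro x hx
    field_simp
    ring
  have hnonneg : 0 ≤ (b - β') / (α + β') := div_nonneg (by linarith) hβ'.le
  have hanti : (b - β') / (α + β') ≤ (b - β) / (α + β) := by
    rw [hrat β' hβ', hrat β hβ]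
    gcongr
    linarith
  gcongr

theorem defender_best_response_general (pD qD α γ : ℝ)
    (hpD : pD ∈ Set.Ioo (0:ℝ) 1) (hqD : 0 < qD)
    (hα : α ∈ Set.Ioc (0:ℝ) 1)
    (g : ℝ → ℝ)
    (hg : ∀ β, g β = (pD * (1 - γ) ^ 2 + qD * β ^ 2 + γ ^ 2) * (α / (α + β)) ^ 2)
    (βbar : ℝ) (hβbar : βbar = (pD * (1 - γ) ^ 2 + γ ^ 2) / (qD * α)) :
    (βbar < 1 → ∀ β ∈ Set.Ioc (0:ℝ) 1, g βbar ≤ g β) ∧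
    (1 ≤ βbar → ∀ β ∈ Set.Ioc (0:ℝ) 1, g 1 ≤ g β) := by
  have hα0 : 0 < α := hα.1
  have hβbar0 : 0 ≤ βbar := by rw [hβbar]; have := hpD.1; positivity
  have hc : pD * (1 - γ) ^ 2 + γ ^ 2 = qD * α * βbar := by
    rw [hβbar]
    field_simp
  have hg' : ∀ β, 0 < α + β → g β = qD * α ^ 2 * βbar / (α + βbar) +
      qD * α ^ 3 / (α + βbar) * ((βbar - β) / (α + β)) ^ 2 := by
    intro β hβ
    rw [hg, ← mul_add_sq_mul_div_sq_eq _ _ _ _ hβ.ne' (by positivity), ← hc]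
    ring
  refine ⟨fun _ β hβ => ?_, fun h1 β hβ => ?_⟩
  · rw [hg' βbar (by positivity), hg' β (by linarith [hβ.1]), sub_self, zero_div]
    gcongr _ + _ * ?_
    simp [sq_nonneg]
  · rw [hg' 1 (by linarith), hg' β (by linarith [hβ.1])]
    gcongr _ + _ * ?_
    exact sq_sub_div_add_le_of_le (by linarith [hβ.1]) hβ.2 h1

/-- Lemma 1, defender's best response. -/
theorem defender_best_response (pD qD α γ : ℝ)
    (hpD : pD ∈ Set.Ioo (0:ℝ) 1) (hqD : 0 < qD)
    (hα : α ∈ Set.Ioc (0:ℝ) 1) (hγ : γ ∈ Set.Icc (0:ℝ) 1)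
    (g : ℝ → ℝ)
    (hg : ∀ β, g β = (pD * (1 - γ) ^ 2 + qD * β ^ 2 + γ ^ 2) * (α / (α + β)) ^ 2)
    (βbar : ℝ) (hβbar : βbar = (pD * (1 - γ) ^ 2 + γ ^ 2) / (qD * α)) :
    (βbar < 1 → ∀ β ∈ Set.Ioc (0:ℝ) 1, g βbar ≤ g β) ∧
    (1 ≤ βbar → ∀ β ∈ Set.Ioc (0:ℝ) 1, g 1 ≤ g β) :=
  defender_best_response_general pD qD α γ hpD hqD hα g hg βbar hβbar
end

section
/- (Lemma 1, insider's maximum is at an endpoint.) Let p_I ∈ (0,1), q_I ≥ 0, α, β ∈ (0,1], and define h(γ) = (p_I + γ²)·(β/(α+β))² − (q_I γ + γ²/2) for γ ∈ [0,1]. Then for every γ ∈ [0,1], h(γ) ≤ max(h(0), h(1)); i.e., the insider's profit over [0,1] is maximized at γ = 0 or γ = 1. -/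
/-- Lemma 1, insider's maximum is at an endpoint. -/
theorem insider_max_at_endpoint (pI qI α β : ℝ)
    (hpI : pI ∈ Set.Ioo (0:ℝ) 1) (hqI : 0 ≤ qI)
    (hα : α ∈ Set.Ioc (0:ℝ) 1) (hβ : β ∈ Set.Ioc (0:ℝ) 1)
    (h : ℝ → ℝ)
    (hh : ∀ γ, h γ = (pI + γ ^ 2) * (β / (α + β)) ^ 2 - (qI * γ + γ ^ 2 / 2)) :
    ∀ γ ∈ Set.Icc (0:ℝ) 1, h γ ≤ max (h 0) (h 1) := by
  intro γ hγ
  obtain ⟨hγ0, hγ1⟩ := hγ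
  set c : ℝ := (β / (α + β)) ^ 2 with hc
  rw [hh γ, hh 0, hh 1]
  rcases le_or_gt c (1/2) with hle | hgt
  · apply le_max_of_le_left
    nlinarith [sq_nonneg γ, mul_nonneg hqI hγ0]
  · rcases le_or_gt (c - 1/2) qI with h1 | h2
    · apply le_max_of_le_left
      nlinarith [mul_nonneg hγ0 (sub_nonneg.mpr hγ1)]
    · apply le_max_of_le_right
      nlinarith [mul_nonneg hγ0 (sub_nonneg.mpr hγ1), mul_nonneg (sub_nonneg.mpr hγ1) hqI]
end

section
/- (Theorem 1, Scenario A, first kind of Nash equilibrium.) Assume r_A/p_A = r_D/p_D ≤ 1 and 0 ≤ q_I ≤ (1/(r_A/p_A + 1))² − 1/2. Let β* ∈ (0,1] satisfy p_D(β*)²/(r_D + p_D(β*)²) ≥ √(1/2 + q_I), and set α* = r_D/(p_D β*). Then α* ∈ (0,1] and (α*, β*, 1) is a Nash equilibrium of the game with objectives (J_A, J_D, J_I): J_A(α*,β*,1) ≤ J_A(α,β*,1) for all α ∈ (0,1], J_D(α*,β*,1) ≤ J_D(α*,β,1) for all β ∈ (0,1], and J_I(α*,β*,1) ≥ J_I(α*,β*,γ)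 for all γ ∈ [0,1]. -/
/-!
With `γ = 1` the attacker's and the defender's costs have the same shape `(q x² + 1) (y / (x + y))²`
in their own effort `x` against the opponent's effort `y`, and the equal weights `q_A = q_D = q`
forced by `r_A / p_A = r_D / p_D` make the unique best response of either player `x = 1 / (q y)`.
The pair `α* = 1 / (q β*)`, `β*` is therefore a mutual best response for every `β*`.
The insider's gain from switching `γ` to `1` factors as `(1 - γ) ((1 + γ) (c² - 1/2) - q_I)` with
`c = β* / (α* + β*) = p_D β*² / (r_D + p_D β*²)`, which is nonnegative once `c² ≥ 1/2 + q_I`;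
the same bound gives `c ≥ 1/2`, i.e. `α* ≤ β* ≤ 1`.
-/

/-- Attacker's average cost. -/
noncomputable def JA (pA qA α β γ : ℝ) : ℝ :=
  (pA * (1 - γ) ^ 2 + qA * α ^ 2 + γ ^ 2) * (β / (α + β)) ^ 2

/-- Defender's average cost. -/
noncomputable def JD (pD qD α β γ : ℝ) : ℝ :=
  (pD * (1 - γ) ^ 2 + qD * β ^ 2 + γ ^ 2) * (α / (α + β)) ^ 2

/-- Insider's average profit. -/
noncomputable def JI (pI qI α β γ : ℝ) : ℝ :=
  (pI + γ ^ 2) * (β / (α + β)) ^ 2 - (qI * γ + γ ^ 2 / 2)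

/-- Attacker's reduced cost (no cooperation with the insider): J_A⁰(α,β) = J_A(α,β,0). -/
noncomputable def JA0 (pA qA α β : ℝ) : ℝ := JA pA qA α β 0

/-- Defender's reduced cost (unaware of the insider): J_D⁰(α,β) = J_D(α,β,0). -/
noncomputable def JD0 (pD qD α β : ℝ) : ℝ := JD pD qD α β 0

open Set

noncomputable def leakCost (q x y : ℝ) : ℝ :=
  (q * x ^ 2 + 1) * (y / (x + y)) ^ 2

theorem JA_one (pA qA α β : ℝ) : JA pA qA α β 1 = leakCost qA α β := by
  simp [JA, leakCost]

theorem JD_one (pD qD α β : ℝ) : JD pD qD α β 1 = leakCost qD β α := by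
  simp [JD, leakCost, add_comm]

theorem leakCost_le_of_mul_eq_one {q x y xs : ℝ} (hq : 0 < q) (hy : 0 < y) (hx : 0 ≤ x)
    (hxs : q * xs * y = 1) : leakCost q xs y ≤ leakCost q x y := by
  have hxs0 : 0 < xs := by
    by_contra! h
    nlinarith [mul_pos hq hy]
  have hdiff : (q * x ^ 2 + 1) * (xs + y) ^ 2 - (q * xs ^ 2 + 1) * (x + y) ^ 2
      = (1 + q * y ^ 2) * (x - xs) ^ 2 := by
    linear_combination (2 * (x - xs) * (x + y)) * hxs
  have hratio : (q * xs ^ 2 + 1) / (xs + y) ^ 2 ≤ (q * x ^ 2 + 1) / (x + y) ^ 2 := by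
    rw [div_le_div_iff₀ (by positivity) (by positivity)]
    linarith [hdiff, mul_nonneg (by positivity : (0 : ℝ) ≤ 1 + q * y ^ 2) (sq_nonneg (x - xs))]
  have hform (x : ℝ) : leakCost q x y = (q * x ^ 2 + 1) / (x + y) ^ 2 * y ^ 2 := by
    rw [leakCost, div_pow]
    ring
  rw [hform, hform]
  gcongr

theorem JI_sub_JI_one (pI qI α β γ : ℝ) :
    JI pI qI α β 1 - JI pI qI α β γ = (1 - γ) * ((1 + γ) * ((β / (α + β)) ^ 2 - 1 / 2) - qI) := by
  unfold JI
  ring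

theorem JI_le_JI_one {qI α β γ : ℝ} (pI : ℝ) (hqI : 0 ≤ qI) (hshare : 1 / 2 + qI ≤ (β / (α + β)) ^ 2)
    (hγ : γ ∈ Icc (0 : ℝ) 1) : JI pI qI α β γ ≤ JI pI qI α β 1 := by
  have hgain : 0 ≤ (1 + γ) * ((β / (α + β)) ^ 2 - 1 / 2) - qI := by
    nlinarith [hγ.1]
  linarith [JI_sub_JI_one pI qI α β γ, mul_nonneg (sub_nonneg.mpr hγ.2) hgain]

theorem scenarioA_first_NE_general (pA pD pI qA qD qI rA rD : ℝ)
    (hpA : pA ∈ Set.Ioo (0:ℝ) 1) (hpD : pD ∈ Set.Ioo (0:ℝ) 1)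
    (hqD : 0 < qD) (hqI : 0 ≤ qI)
    (hrA : rA = pA / qA) (hrD : rD = pD / qD)
    (h1 : rA / pA = rD / pD)
    (βs : ℝ) (hβs : βs ∈ Set.Ioc (0:ℝ) 1)
    (hβcond : Real.sqrt (1 / 2 + qI) ≤ pD * βs ^ 2 / (rD + pD * βs ^ 2))
    (αs : ℝ) (hαs : αs = rD / (pD * βs)) :
    αs ∈ Set.Ioc (0:ℝ) 1 ∧
    (∀ α ∈ Set.Ioc (0:ℝ) 1, JA pA qA αs βs 1 ≤ JA pA qA α βs 1) ∧
    (∀ β ∈ Set.Ioc (0:ℝ) 1, JD pD qD αs βs 1 ≤ JD pD qD αs β 1) ∧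
    (∀ γ ∈ Set.Icc (0:ℝ) 1, JI pI qI αs βs γ ≤ JI pI qI αs βs 1) := by
  obtain ⟨hβ0, hβ1⟩ := hβs
  have hpD0 := hpD.1
  have hq : qA = qD := by
    rw [hrA, hrD, div_div_cancel_left' hpA.1.ne', div_div_cancel_left' hpD0.ne'] at h1
    exact inv_injective h1
  have hα0 : 0 < αs := by rw [hαs, hrD]; positivity
  have hαβ : qD * αs * βs = 1 := by rw [hαs, hrD]; field_simp
  have hshare : βs / (αs + βs) = pD * βs ^ 2 / (rD + pD * βs ^ 2) := by
    rw [hαs]; field_simp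
  obtain ⟨hc0, hsq⟩ := Real.sqrt_le_iff.mp (hshare ▸ hβcond)
  have hhalf : 1 / 2 ≤ βs / (αs + βs) := by nlinarith
  have hαβ_le : αs ≤ βs := by
    rw [le_div_iff₀ (by positivity)] at hhalf
    linarith
  refine ⟨⟨hα0, hαβ_le.trans hβ1⟩, ?_, ?_, ?_⟩
  · intro α hα
    rw [JA_one, JA_one, hq]
    exact leakCost_le_of_mul_eq_one hqD hβ0 hα.1.le hαβ
  · intro β hβ
    rw [JD_one, JD_one]
    exact leakCost_le_of_mul_eq_one hqD hα0 hβ.1.le (by linear_combination hαβ)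
  · intro γ hγ
    exact JI_le_JI_one pI hqI hsq hγ

/-- Theorem 1, Scenario A, first kind of Nash equilibrium. -/
theorem scenarioA_first_NE (pA pD pI qA qD qI rA rD : ℝ)
    (hpA : pA ∈ Set.Ioo (0:ℝ) 1) (hpD : pD ∈ Set.Ioo (0:ℝ) 1) (hpI : pI ∈ Set.Ioo (0:ℝ) 1)
    (hqA : 0 < qA) (hqD : 0 < qD) (hqI : 0 ≤ qI)
    (hrA : rA = pA / qA) (hrD : rD = pD / qD)
    (h1 : rA / pA = rD / pD) (h2 : rD / pD ≤ 1)
    (h3 : qI ≤ (1 / (rA / pA + 1)) ^ 2 - 1 / 2)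
    (βs : ℝ) (hβs : βs ∈ Set.Ioc (0:ℝ) 1)
    (hβcond : Real.sqrt (1 / 2 + qI) ≤ pD * βs ^ 2 / (rD + pD * βs ^ 2))
    (αs : ℝ) (hαs : αs = rD / (pD * βs)) :
    αs ∈ Set.Ioc (0:ℝ) 1 ∧
    (∀ α ∈ Set.Ioc (0:ℝ) 1, JA pA qA αs βs 1 ≤ JA pA qA α βs 1) ∧
    (∀ β ∈ Set.Ioc (0:ℝ) 1, JD pD qD αs βs 1 ≤ JD pD qD αs β 1) ∧
    (∀ γ ∈ Set.Icc (0:ℝ) 1, JI pI qI αs βs γ ≤ JI pI qI αs βs 1) :=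
  scenarioA_first_NE_general pA pD pI qA qD qI rA rD hpA hpD hqD hqI hrA hrD h1 βs hβs hβcond αs hαs
end

section
/- (Theorem 1, Scenario A, second kind of Nash equilibrium.) Assume r_A/p_A ≤ 1, r_A/p_A < r_D/p_D, and 0 ≤ q_I ≤ (1/(r_A/p_A + 1))² − 1/2. Then (r_A/p_A, 1, 1) is a Nash equilibrium of the game with objectives (J_A, J_D, J_I): J_A(r_A/p_A,1,1) ≤ J_A(α,1,1) for all α ∈ (0,1], J_D(r_A/p_A,1,1) ≤ J_D(r_A/p_A,β,1) for all β ∈ (0,1], and J_I(r_A/p_A,1,1) ≥ J_I(r_A/p_A,1,γ) for all γ ∈ [0,1]. -/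
set_option maxHeartbeats 1000000 in
/-- Theorem 1, Scenario A, second kind of Nash equilibrium. -/
theorem scenarioA_second_NE (pA pD pI qA qD qI rA rD : ℝ)
    (hpA : pA ∈ Set.Ioo (0:ℝ) 1) (hpD : pD ∈ Set.Ioo (0:ℝ) 1) (hpI : pI ∈ Set.Ioo (0:ℝ) 1)
    (hqA : 0 < qA) (hqD : 0 < qD) (hqI : 0 ≤ qI)
    (hrA : rA = pA / qA) (hrD : rD = pD / qD)
    (h1 : rA / pA ≤ 1) (h2 : rA / pA < rD / pD)
    (h3 : qI ≤ (1 / (rA / pA + 1)) ^ 2 - 1 / 2) :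
    (∀ α ∈ Set.Ioc (0:ℝ) 1, JA pA qA (rA / pA) 1 1 ≤ JA pA qA α 1 1) ∧
    (∀ β ∈ Set.Ioc (0:ℝ) 1, JD pD qD (rA / pA) 1 1 ≤ JD pD qD (rA / pA) β 1) ∧
    (∀ γ ∈ Set.Icc (0:ℝ) 1, JI pI qI (rA / pA) 1 γ ≤ JI pI qI (rA / pA) 1 1) := by
  obtain ⟨hpA0, hpA1⟩ := hpA
  obtain ⟨hpD0, hpD1⟩ := hpD
  obtain ⟨hpI0, hpI1⟩ := hpI
  have haq : rA / pA = 1 / qA := by rw [hrA]; field_simp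
  have ha0 : 0 < rA / pA := by rw [haq]; positivity
  have hqAa : qA * (rA / pA) = 1 := by rw [haq]; field_simp
  have hqDa : qD * (rA / pA) < 1 := by
    have hdq : rD / pD = 1 / qD := by rw [hrD]; field_simp
    have hqq : qD < qA := by
      rw [haq, hdq, div_lt_div_iff₀ hqA hqD, one_mul, one_mul] at h2
      exact h2
    calc qD * (rA / pA) < qA * (rA / pA) := mul_lt_mul_of_pos_right hqq ha0
      _ = 1 := hqAa
  set a := rA / pA with ha
  clear_value a
  have ha1 : a ≤ 1 := h1
  have hden1 : (0:ℝ) < a + 1 := by linarith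
  refine ⟨?_, ?_, ?_⟩
  · rintro α ⟨hα0, hα1⟩
    simp only [JA]
    have hden2 : (0:ℝ) < α + 1 := by linarith
    rw [div_pow, div_pow, ← mul_div_assoc, ← mul_div_assoc, div_le_div_iff₀ (by positivity) (by positivity)]
    nlinarith [sq_nonneg (α - a), mul_pos ha0 hα0,
      mul_nonneg ha0.le (sq_nonneg (α - a))]
  · rintro β ⟨hβ0, hβ1⟩
    simp only [JD]
    have hden2 : (0:ℝ) < a + β := by linarith
    rw [div_pow, div_pow, ← mul_div_assoc, ← mul_div_assoc, div_le_div_iff₀ (by positivity) (by positivity)]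
    have key : (qD * 1 ^ 2 + 1) * (a + β) ^ 2 ≤ (qD * β ^ 2 + 1) * (a + 1) ^ 2 := by
      have hqa2 : qD * a * a < 1 := by nlinarith
      have h4 : (0:ℝ) ≤ (1 - β) * β * ((1 + a) * (1 - qD * a)) :=
        mul_nonneg (mul_nonneg (by linarith) hβ0.le)
          (mul_nonneg (by linarith) (by linarith))
      have h5 : (0:ℝ) ≤ (1 - β) ^ 2 * (2 * a + 1 - qD * a * a) :=
        mul_nonneg (sq_nonneg _) (by linarith)
      nlinarith [h4, h5]
    nlinarith [mul_le_mul_of_nonneg_left key (sq_nonneg a)]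
  · rintro γ ⟨hγ0, hγ1⟩
    simp only [JI]
    set k := (1 / (a + 1)) ^ 2 with hk
    clear_value k
    have hk2 : qI ≤ k - 1 / 2 := h3
    have h4 : (0:ℝ) ≤ (1 - γ) * (k - 1/2 - qI) :=
      mul_nonneg (by linarith) (by linarith)
    have h5 : (0:ℝ) ≤ (1 - γ) * γ * (k - 1/2) :=
      mul_nonneg (mul_nonneg (by linarith) hγ0) (by linarith)
    nlinarith [h4, h5]
end

section
/- (Theorem 1, Scenario B, first kind of Nash equilibrium.) Assume r_A = r_D/p_D ≤ 1 and 0 ≤ q_I ≤ (1/(r_A + 1))² − 1/2. Let β* ∈ (0,1] satisfy p_D(β*)²/(r_D + p_D(β*)²) ≥ √(1/2 + q_I), and set α* = r_D/(p_D β*). Then α* ∈ (0,1] and (α*, β*, 1) is a Nash equilibrium of the game with objectives (J_A⁰, J_D, J_I): J_A⁰(α*,β*) ≤ J_A⁰(α,β*) for all α ∈ (0,1], J_D(α*,β*,1) ≤ J_D(α*,β,1) for all β ∈ (0,1], and J_I(α*,β*,1) ≥ J_I(α*,β*,γ) for all γ ∈ [0,1]. -/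
lemma minlem (p q b a0 a : ℝ) (hq : 0 < q) (hb : 0 < b) (ha0 : 0 < a0) (ha : 0 < a)
    (hkey : q * (a0 * b) = p) :
    (p + q * a0 ^ 2) * (b / (a0 + b)) ^ 2 ≤ (p + q * a ^ 2) * (b / (a + b)) ^ 2 := by
  have h1 : 0 < a0 + b := by linarith
  have h2 : 0 < a + b := by linarith
  rw [div_pow, div_pow, ← mul_div_assoc, ← mul_div_assoc,
    div_le_div_iff₀ (by positivity) (by positivity), ← hkey]
  nlinarith [mul_nonneg (mul_nonneg (sq_nonneg (a - a0)) hq.le)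
    (le_of_lt (show (0:ℝ) < b ^ 3 * (a0 + b) by positivity))]

/-- Theorem 1, Scenario B, first kind of Nash equilibrium. -/
theorem scenarioB_first_NE (pA pD pI qA qD qI rA rD : ℝ)
    (hpA : pA ∈ Set.Ioo (0:ℝ) 1) (hpD : pD ∈ Set.Ioo (0:ℝ) 1) (hpI : pI ∈ Set.Ioo (0:ℝ) 1)
    (hqA : 0 < qA) (hqD : 0 < qD) (hqI : 0 ≤ qI)
    (hrA : rA = pA / qA) (hrD : rD = pD / qD)
    (h1 : rA = rD / pD) (h2 : rD / pD ≤ 1)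
    (h3 : qI ≤ (1 / (rA + 1)) ^ 2 - 1 / 2)
    (βs : ℝ) (hβs : βs ∈ Set.Ioc (0:ℝ) 1)
    (hβcond : Real.sqrt (1 / 2 + qI) ≤ pD * βs ^ 2 / (rD + pD * βs ^ 2))
    (αs : ℝ) (hαs : αs = rD / (pD * βs)) :
    αs ∈ Set.Ioc (0:ℝ) 1 ∧
    (∀ α ∈ Set.Ioc (0:ℝ) 1, JA0 pA qA αs βs ≤ JA0 pA qA α βs) ∧
    (∀ β ∈ Set.Ioc (0:ℝ) 1, JD pD qD αs βs 1 ≤ JD pD qD αs β 1) ∧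
    (∀ γ ∈ Set.Icc (0:ℝ) 1, JI pI qI αs βs γ ≤ JI pI qI αs βs 1) := by
  obtain ⟨hβpos, hβle⟩ := hβs
  obtain ⟨hpA0, hpA1⟩ := hpA
  obtain ⟨hpD0, hpD1⟩ := hpD
  obtain ⟨hpI0, hpI1⟩ := hpI
  have hrDpos : 0 < rD := by rw [hrD]; positivity
  have hαpos : 0 < αs := by rw [hαs]; positivity
  have hsum : 0 < αs + βs := by linarith
  have hkeyD : qD * (αs * βs) = 1 := by
    rw [hαs, hrD]; field_simp
  have hkeyA : qA * (αs * βs) = pA := by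
    have hab : αs * βs = rA := by
      rw [hαs, h1]; field_simp
    rw [hab, hrA]; field_simp
  have hfrac : pD * βs ^ 2 / (rD + pD * βs ^ 2) = βs / (αs + βs) := by
    rw [hαs]; rw [div_eq_div_iff (by positivity) (by rw [← hαs]; positivity)]
    field_simp
  have hK : 1/2 + qI ≤ (βs/(αs+βs))^2 := by
    rw [hfrac] at hβcond
    calc 1/2 + qI = Real.sqrt (1/2 + qI) ^ 2 := (Real.sq_sqrt (by linarith)).symm
    _ ≤ (βs/(αs+βs))^2 := by
        apply pow_le_pow_left₀ (Real.sqrt_nonneg _) hβcond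
  have hK' : (1/2 + qI) * (αs + βs)^2 ≤ βs^2 := by
    rw [div_pow] at hK
    exact (le_div_iff₀ (by positivity)).mp hK
  have hαle : αs ≤ 1 := by
    nlinarith [mul_pos hαpos hβpos, sq_nonneg αs,
      mul_nonneg hqI (sq_nonneg (αs + βs)), mul_pos hαpos (mul_pos hαpos hβpos)]
  refine ⟨⟨hαpos, hαle⟩, ?_, ?_, ?_⟩
  · rintro α ⟨hα0, hα1⟩
    have h := minlem pA qA βs αs α hqA hβpos hαpos hα0 hkeyA
    calc JA0 pA qA αs βs = (pA + qA * αs ^ 2) * (βs / (αs + βs)) ^ 2 := by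
          simp only [JA0, JA]; ring
    _ ≤ (pA + qA * α ^ 2) * (βs / (α + βs)) ^ 2 := h
    _ = JA0 pA qA α βs := by simp only [JA0, JA]; ring
  · rintro β ⟨hβ0, hβ1⟩
    have hkeyD' : qD * (βs * αs) = 1 := by rw [← hkeyD]; ring
    have h := minlem 1 qD αs βs β hqD hαpos hβpos hβ0 hkeyD'
    calc JD pD qD αs βs 1 = (1 + qD * βs ^ 2) * (αs / (βs + αs)) ^ 2 := by
          simp only [JD]; ring
    _ ≤ (1 + qD * β ^ 2) * (αs / (β + αs)) ^ 2 := h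
    _ = JD pD qD αs β 1 := by simp only [JD]; ring
  · rintro γ ⟨hγ0, hγ1⟩
    simp only [JI]
    set k : ℝ := (βs / (αs + βs)) ^ 2 with hk
    have hA : 0 ≤ (1 - γ ^ 2) * (k - 1 / 2 - qI) :=
      mul_nonneg (by nlinarith) (by linarith [hK])
    have hB : 0 ≤ qI * γ * (1 - γ) :=
      mul_nonneg (mul_nonneg hqI hγ0) (by linarith)
    linarith [hA, hB]
end

section
/- (Theorem 2, Scenario C, first kind of Nash equilibrium.) Assume r_A/p_A = r_D ≤ 1 and 0 ≤ q_I ≤ (1/(r_A/p_A + 1))² − 1/2. Let β* ∈ (0,1] satisfy (β*)²/(r_D + (β*)²) ≥ √(1/2 + q_I), and set α* = r_D/β*. Then α* ∈ (0,1] and (α*, β*, 1) is a Nash equilibrium of the game with objectives (J_A, J_D⁰, J_I): J_A(α*,β*,1) ≤ J_A(α,β*,1) for all α ∈ (0,1], J_D⁰(α*,β*) ≤ J_D⁰(α*,β) for all β ∈ (0,1], and J_I(α*,β*,1) ≥ J_I(α*,β*,γ) for all γ ∈ [0,1]. -/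
/-!
Against a defender playing `β` and an insider who fully cooperates (`γ = 1`), the attacker's cost is
`β² (1 + q_A α²) / (α + β)²`; against an attacker playing `α`, the defender's reduced cost is
`α² (p_D + q_D β²) / (α + β)²`. Both have the shape `(p + q x²) / (x + y)²`, which is minimised over
`x > 0` exactly where `q x y = p`. Since `r_A / p_A = 1 / q_A`, both `q_A α* β* = 1` and
`q_D β* α* = p_D` follow from `α* β* = r_D`. The insider's gain from `γ` to `1` factors as `(1 - γ)((1 + γ) K - 1/2 - q_I)`
with `K = (β/(α+β))²`, nonnegative once `K ≥ 1/2 + q_I`; the condition on `β*` is exactly this bound,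
and it also forces `α* < β*`.
-/

open Set

theorem add_mul_sq_div_add_sq_le_of_mul_eq {p q x₀ x y : ℝ} (hq : 0 ≤ q) (hy : 0 ≤ y)
    (hx₀ : q * x₀ * y = p) (hx₀y : 0 < x₀ + y) (hxy : 0 < x + y) :
    (p + q * x₀ ^ 2) / (x₀ + y) ^ 2 ≤ (p + q * x ^ 2) / (x + y) ^ 2 := by
  rw [div_le_div_iff₀ (by positivity) (by positivity)]
  have key : (p + q * x ^ 2) * (x₀ + y) ^ 2 - (p + q * x₀ ^ 2) * (x + y) ^ 2
      = q * (x₀ + y) * y * (x - x₀) ^ 2 := by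
    subst hx₀; ring
  have : 0 ≤ q * (x₀ + y) * y * (x - x₀) ^ 2 := by positivity
  linarith

theorem JA_one_eq (pA qA α β : ℝ) : JA pA qA α β 1 = β ^ 2 * ((1 + qA * α ^ 2) / (α + β) ^ 2) := by
  rw [JA, div_pow]; ring

theorem JD0_eq (pD qD α β : ℝ) : JD0 pD qD α β = α ^ 2 * ((pD + qD * β ^ 2) / (β + α) ^ 2) := by
  rw [JD0, JD, div_pow]; ring

theorem JA_one_isMinOn {pA qA α₀ β : ℝ} (hqA : 0 ≤ qA) (hβ : 0 < β) (hα₀ : 0 < α₀)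
    (hprod : qA * α₀ * β = 1) :
    IsMinOn (fun α => JA pA qA α β 1) (Ioi 0) α₀ := by
  refine isMinOn_iff.2 fun α (hα : 0 < α) => ?_
  simp only [JA_one_eq]
  exact mul_le_mul_of_nonneg_left
    (add_mul_sq_div_add_sq_le_of_mul_eq hqA hβ.le hprod (by positivity) (by positivity)) (sq_nonneg β)

theorem JD0_isMinOn {pD qD α β₀ : ℝ} (hqD : 0 ≤ qD) (hα : 0 < α) (hβ₀ : 0 < β₀)
    (hprod : qD * β₀ * α = pD) :
    IsMinOn (fun β => JD0 pD qD α β) (Ioi 0) β₀ := by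
  refine isMinOn_iff.2 fun β (hβ : 0 < β) => ?_
  simp only [JD0_eq]
  exact mul_le_mul_of_nonneg_left
    (add_mul_sq_div_add_sq_le_of_mul_eq hqD hα.le hprod (by positivity) (by positivity)) (sq_nonneg α)

theorem JI_isMaxOn_one {pI qI α β : ℝ} (hqI : 0 ≤ qI) (hK : 1 / 2 + qI ≤ (β / (α + β)) ^ 2) :
    IsMaxOn (fun γ => JI pI qI α β γ) (Icc 0 1) 1 := by
  refine isMaxOn_iff.2 fun γ ⟨hγ0, hγ1⟩ => ?_
  set K := (β / (α + β)) ^ 2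
  have gain : JI pI qI α β 1 - JI pI qI α β γ = (1 - γ) * (γ * (K - 1 / 2) + (K - 1 / 2 - qI)) := by
    unfold JI; ring
  have : 0 ≤ (1 - γ) * (γ * (K - 1 / 2) + (K - 1 / 2 - qI)) := by
    apply mul_nonneg <;> nlinarith
  linarith

theorem lt_of_half_le_sq_div {α β : ℝ} (hα : 0 < α) (hβ : 0 < β) (h : 1 / 2 ≤ (β / (α + β)) ^ 2) :
    α < β := by
  by_contra! hle
  have : β / (α + β) ≤ 1 / 2 := by rw [div_le_iff₀ (by positivity)]; linarith
  have : 0 ≤ β / (α + β) := by positivity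
  nlinarith

theorem scenarioC_first_NE_general (pA pD pI qA qD qI rA rD : ℝ)
    (hpA : pA ∈ Set.Ioo (0:ℝ) 1) (hpD : pD ∈ Set.Ioo (0:ℝ) 1)
    (hqA : 0 < qA) (hqD : 0 < qD) (hqI : 0 ≤ qI)
    (hrA : rA = pA / qA) (hrD : rD = pD / qD)
    (h1 : rA / pA = rD)
    (βs : ℝ) (hβs : βs ∈ Set.Ioc (0:ℝ) 1)
    (hβcond : Real.sqrt (1 / 2 + qI) ≤ βs ^ 2 / (rD + βs ^ 2))
    (αs : ℝ) (hαs : αs = rD / βs) :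
    αs ∈ Set.Ioc (0:ℝ) 1 ∧
    (∀ α ∈ Set.Ioc (0:ℝ) 1, JA pA qA αs βs 1 ≤ JA pA qA α βs 1) ∧
    (∀ β ∈ Set.Ioc (0:ℝ) 1, JD0 pD qD αs βs ≤ JD0 pD qD αs β) ∧
    (∀ γ ∈ Set.Icc (0:ℝ) 1, JI pI qI αs βs γ ≤ JI pI qI αs βs 1) := by
  obtain ⟨hβ0, hβ1⟩ := hβs
  have hrD0 : 0 < rD := hrD ▸ div_pos hpD.1 hqD
  have hαs0 : 0 < αs := hαs ▸ div_pos hrD0 hβ0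
  have hprod : αs * βs = rD := by rw [hαs]; field_simp
  have hqArD : qA * rD = 1 := by rw [← h1, hrA]; field_simp [hpA.1.ne']
  have hK : 1 / 2 + qI ≤ (βs / (αs + βs)) ^ 2 := by
    have hshare : βs / (αs + βs) = βs ^ 2 / (rD + βs ^ 2) := by rw [hαs]; field_simp
    rw [hshare]
    exact (Real.sqrt_le_iff.1 hβcond).2
  have hlt : αs < βs := lt_of_half_le_sq_div hαs0 hβ0 (by linarith)
  refine ⟨⟨hαs0, by linarith⟩, fun α hα => ?_, fun β hβ => ?_, isMaxOn_iff.1 (JI_isMaxOn_one hqI hK)⟩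
  · refine isMinOn_iff.1 (JA_one_isMinOn hqA.le hβ0 hαs0 ?_) α hα.1
    rw [mul_assoc, hprod, hqArD]
  · refine isMinOn_iff.1 (JD0_isMinOn hqD.le hαs0 hβ0 ?_) β hβ.1
    rw [mul_assoc, mul_comm βs, hprod, hrD]; field_simp

/-- Theorem 2, Scenario C, first kind of Nash equilibrium. -/
theorem scenarioC_first_NE (pA pD pI qA qD qI rA rD : ℝ)
    (hpA : pA ∈ Set.Ioo (0:ℝ) 1) (hpD : pD ∈ Set.Ioo (0:ℝ) 1) (hpI : pI ∈ Set.Ioo (0:ℝ) 1)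
    (hqA : 0 < qA) (hqD : 0 < qD) (hqI : 0 ≤ qI)
    (hrA : rA = pA / qA) (hrD : rD = pD / qD)
    (h1 : rA / pA = rD) (h2 : rD ≤ 1)
    (h3 : qI ≤ (1 / (rA / pA + 1)) ^ 2 - 1 / 2)
    (βs : ℝ) (hβs : βs ∈ Set.Ioc (0:ℝ) 1)
    (hβcond : Real.sqrt (1 / 2 + qI) ≤ βs ^ 2 / (rD + βs ^ 2))
    (αs : ℝ) (hαs : αs = rD / βs) :
    αs ∈ Set.Ioc (0:ℝ) 1 ∧
    (∀ α ∈ Set.Ioc (0:ℝ) 1, JA pA qA αs βs 1 ≤ JA pA qA α βs 1) ∧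
    (∀ β ∈ Set.Ioc (0:ℝ) 1, JD0 pD qD αs βs ≤ JD0 pD qD αs β) ∧
    (∀ γ ∈ Set.Icc (0:ℝ) 1, JI pI qI αs βs γ ≤ JI pI qI αs βs 1) :=
  scenarioC_first_NE_general pA pD pI qA qD qI rA rD hpA hpD hqA hqD hqI hrA hrD h1 βs hβs hβcond αs
    hαs
end

section
/- (Theorem 2, Scenario C, second kind of Nash equilibrium.) Assume r_A/p_A ≤ 1, r_A/p_A < r_D, and 0 ≤ q_I ≤ (1/(r_A/p_A + 1))² − 1/2. Then (r_A/p_A, 1, 1) is a Nash equilibrium of the game with objectives (J_A, J_D⁰, J_I): J_A(r_A/p_A,1,1) ≤ J_A(α,1,1) for all α ∈ (0,1], J_D⁰(r_A/p_A,1) ≤ J_D⁰(r_A/p_A,β) for all β ∈ (0,1], and J_I(r_A/p_A,1,1) ≥ J_I(r_A/p_A,1,γ) for all γ ∈ [0,1]. -/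
/-- Theorem 2, Scenario C, second kind of Nash equilibrium. -/
theorem scenarioC_second_NE (pA pD pI qA qD qI rA rD : ℝ)
    (hpA : pA ∈ Set.Ioo (0:ℝ) 1) (hpD : pD ∈ Set.Ioo (0:ℝ) 1) (hpI : pI ∈ Set.Ioo (0:ℝ) 1)
    (hqA : 0 < qA) (hqD : 0 < qD) (hqI : 0 ≤ qI)
    (hrA : rA = pA / qA) (hrD : rD = pD / qD)
    (h1 : rA / pA ≤ 1) (h2 : rA / pA < rD)
    (h3 : qI ≤ (1 / (rA / pA + 1)) ^ 2 - 1 / 2) :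
    (∀ α ∈ Set.Ioc (0:ℝ) 1, JA pA qA (rA / pA) 1 1 ≤ JA pA qA α 1 1) ∧
    (∀ β ∈ Set.Ioc (0:ℝ) 1, JD0 pD qD (rA / pA) 1 ≤ JD0 pD qD (rA / pA) β) ∧
    (∀ γ ∈ Set.Icc (0:ℝ) 1, JI pI qI (rA / pA) 1 γ ≤ JI pI qI (rA / pA) 1 1) := by
  obtain ⟨hpA0, hpA1⟩ := hpA
  obtain ⟨hpD0, hpD1⟩ := hpD
  set a : ℝ := rA / pA with haa
  clear_value a
  have ha : a = 1 / qA := by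
    rw [haa, hrA, div_div, mul_comm, ← div_div, div_self (ne_of_gt hpA0)]
  have ha0 : 0 < a := by rw [ha]; positivity
  have hqa : qA * a = 1 := by rw [ha]; field_simp
  have ha1 : (0:ℝ) < a + 1 := by linarith
  -- defender condition: qD * a < pD
  have hqd : qD * a < pD := by
    have := h2
    rw [hrD, lt_div_iff₀ hqD] at this
    linarith [this]
  refine ⟨?_, ?_, ?_⟩
  · intro α hα
    obtain ⟨hα0, hα1⟩ := hα
    have hαa : (0:ℝ) < α + 1 := by linarith
    simp only [JA]
    have key : (pA * (1 - 1) ^ 2 + qA * a ^ 2 + 1 ^ 2) * (α + 1) ^ 2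
        ≤ (pA * (1 - 1) ^ 2 + qA * α ^ 2 + 1 ^ 2) * (a + 1) ^ 2 := by
      nlinarith [sq_nonneg (qA * α - 1), sq_nonneg (α - a), mul_pos hqA ha0,
        sq_nonneg (α - a), mul_pos ha0 ha0]
    calc (pA * (1 - 1) ^ 2 + qA * a ^ 2 + 1 ^ 2) * (1 / (a + 1)) ^ 2
        = (pA * (1 - 1) ^ 2 + qA * a ^ 2 + 1 ^ 2) / (a + 1) ^ 2 := by
          rw [div_pow, one_pow, mul_one_div]
      _ ≤ (pA * (1 - 1) ^ 2 + qA * α ^ 2 + 1 ^ 2) / (α + 1) ^ 2 := by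
          rw [div_le_div_iff₀ (by positivity) (by positivity)]; linarith [key]
      _ = (pA * (1 - 1) ^ 2 + qA * α ^ 2 + 1 ^ 2) * (1 / (α + 1)) ^ 2 := by
          rw [div_pow, one_pow, mul_one_div]
  · intro β hβ
    obtain ⟨hβ0, hβ1⟩ := hβ
    have hβa : (0:ℝ) < a + β := by linarith
    simp only [JD0, JD]
    have key : (pD * (1 - 0) ^ 2 + qD * 1 ^ 2 + 0 ^ 2) * (a + β) ^ 2
        ≤ (pD * (1 - 0) ^ 2 + qD * β ^ 2 + 0 ^ 2) * (a + 1) ^ 2 := by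
      have h1β : (0:ℝ) ≤ 1 - β := by linarith
      nlinarith [mul_nonneg h1β (mul_nonneg (sub_pos.2 hqd).le
          (by linarith : (0:ℝ) ≤ 2 * a + 1 + β)),
        mul_nonneg h1β (mul_nonneg (mul_pos hqD ha0).le
          (mul_nonneg h1β (by linarith : (0:ℝ) ≤ 1 + a)))]
    calc (pD * (1 - 0) ^ 2 + qD * 1 ^ 2 + 0 ^ 2) * (a / (a + 1)) ^ 2
        = (pD * (1 - 0) ^ 2 + qD * 1 ^ 2 + 0 ^ 2) * a ^ 2 / (a + 1) ^ 2 := by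
          rw [div_pow, mul_div_assoc]
      _ ≤ (pD * (1 - 0) ^ 2 + qD * β ^ 2 + 0 ^ 2) * a ^ 2 / (a + β) ^ 2 := by
          rw [div_le_div_iff₀ (by positivity) (by positivity)]
          nlinarith [key, sq_nonneg a]
      _ = (pD * (1 - 0) ^ 2 + qD * β ^ 2 + 0 ^ 2) * (a / (a + β)) ^ 2 := by
          rw [div_pow, mul_div_assoc]
  · intro γ hγ
    obtain ⟨hγ0, hγ1⟩ := hγ
    simp only [JI]
    set c : ℝ := (1 / (a + 1)) ^ 2 with hc
    have hc3 : qI ≤ c - 1 / 2 := h3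
    clear_value c
    have key : (1 - γ) * (1 + γ) * (c - 1/2) ≥ (1 - γ) * qI := by
      have h1γ : 0 ≤ 1 - γ := by linarith
      have : (1 - γ) * qI ≤ (1 - γ) * ((1 + γ) * (c - 1/2)) := by
        apply mul_le_mul_of_nonneg_left _ h1γ
        calc qI ≤ c - 1/2 := hc3
          _ = 1 * (c - 1/2) := (one_mul _).symm
          _ ≤ (1 + γ) * (c - 1/2) := by
              apply mul_le_mul_of_nonneg_right (by linarith) (by linarith [hc3, hqI])
      linarith [this, mul_assoc (1 - γ) (1 + γ) (c - 1/2)]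
    nlinarith [key]
end

section
/- (Theorem 2, Scenario D, first kind of Nash equilibrium.) Assume r_A = r_D ≤ 1 and 0 ≤ q_I ≤ (1/(r_A + 1))² − 1/2. Let β* ∈ (0,1] satisfy (β*)²/(r_D + (β*)²) ≥ √(1/2 + q_I), and set α* = r_D/β*. Then α* ∈ (0,1] and (α*, β*, 1) is a Nash equilibrium of the game with objectives (J_A⁰, J_D⁰, J_I): J_A⁰(α*,β*) ≤ J_A⁰(α,β*) for all α ∈ (0,1], J_D⁰(α*,β*) ≤ J_D⁰(α*,β) for all β ∈ (0,1], and J_I(α*,β*,1) ≥ J_I(α*,β*,γ) for all γ ∈ [0,1]. -/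
set_option maxHeartbeats 1000000 in
/-- Theorem 2, Scenario D, first kind of Nash equilibrium. -/
theorem scenarioD_first_NE (pA pD pI qA qD qI rA rD : ℝ)
    (hpA : pA ∈ Set.Ioo (0:ℝ) 1) (hpD : pD ∈ Set.Ioo (0:ℝ) 1) (hpI : pI ∈ Set.Ioo (0:ℝ) 1)
    (hqA : 0 < qA) (hqD : 0 < qD) (hqI : 0 ≤ qI)
    (hrA : rA = pA / qA) (hrD : rD = pD / qD)
    (h1 : rA = rD) (h2 : rD ≤ 1)
    (h3 : qI ≤ (1 / (rA + 1)) ^ 2 - 1 / 2)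
    (βs : ℝ) (hβs : βs ∈ Set.Ioc (0:ℝ) 1)
    (hβcond : Real.sqrt (1 / 2 + qI) ≤ βs ^ 2 / (rD + βs ^ 2))
    (αs : ℝ) (hαs : αs = rD / βs) :
    αs ∈ Set.Ioc (0:ℝ) 1 ∧
    (∀ α ∈ Set.Ioc (0:ℝ) 1, JA0 pA qA αs βs ≤ JA0 pA qA α βs) ∧
    (∀ β ∈ Set.Ioc (0:ℝ) 1, JD0 pD qD αs βs ≤ JD0 pD qD αs β) ∧
    (∀ γ ∈ Set.Icc (0:ℝ) 1, JI pI qI αs βs γ ≤ JI pI qI αs βs 1) := by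
  obtain ⟨hβ0, hβ1⟩ := hβs
  obtain ⟨hpA0, hpA1⟩ := hpA
  obtain ⟨hpD0, hpD1⟩ := hpD
  have hrD0 : 0 < rD := by rw [hrD]; positivity
  have hα0 : 0 < αs := by rw [hαs]; positivity
  have hden : 0 < rD + βs ^ 2 := by positivity
  -- From the sqrt condition: (βs²/(rD+βs²))² ≥ 1/2 + qI
  have hK : 1 / 2 + qI ≤ (βs ^ 2 / (rD + βs ^ 2)) ^ 2 := by
    have hs := Real.sq_sqrt (show (0:ℝ) ≤ 1 / 2 + qI by linarith)
    nlinarith [Real.sqrt_nonneg (1 / 2 + qI)]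
  have hKq : (1 / 2 + qI) * (rD + βs ^ 2) ^ 2 ≤ (βs ^ 2) ^ 2 := by
    rw [div_pow, le_div_iff₀ (by positivity)] at hK
    linarith
  have hrβ : rD ≤ βs ^ 2 := by nlinarith
  have hα1 : αs ≤ 1 := by
    rw [hαs, div_le_one hβ0]
    nlinarith
  have hαβ : αs * βs = rD := by
    rw [hαs]; field_simp
  have hpAe : pA = qA * (αs * βs) := by
    rw [hαβ, ← h1, hrA]; field_simp
  have hpDe : pD = qD * (αs * βs) := by
    rw [hαβ, hrD]; field_simp
  have hsum : 0 < αs + βs := by linarith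
  have hne : (αs + βs) ≠ 0 := hsum.ne'
  refine ⟨⟨hα0, hα1⟩, ?_, ?_, ?_⟩
  · intro α hα
    obtain ⟨hα0', hα1'⟩ := hα
    have hsum' : 0 < α + βs := by linarith
    have keyid : (pA + qA * α ^ 2) * (αs + βs) ^ 2 - (pA + qA * αs ^ 2) * (α + βs) ^ 2
        = qA * βs * (αs + βs) * (α - αs) ^ 2 := by rw [hpAe]; ring
    have hpos : 0 ≤ qA * βs * (αs + βs) * (α - αs) ^ 2 := by positivity
    have key : (pA + qA * αs ^ 2) * (α + βs) ^ 2 ≤ (pA + qA * α ^ 2) * (αs + βs) ^ 2 := by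
      linarith
    have e1 : JA0 pA qA αs βs = (pA + qA * αs ^ 2) * βs ^ 2 / (αs + βs) ^ 2 := by
      simp only [JA0, JA]; field_simp; try ring
    have e2 : JA0 pA qA α βs = (pA + qA * α ^ 2) * βs ^ 2 / (α + βs) ^ 2 := by
      simp only [JA0, JA]; field_simp; try ring
    rw [e1, e2, div_le_div_iff₀ (by positivity) (by positivity)]
    calc (pA + qA * αs ^ 2) * βs ^ 2 * (α + βs) ^ 2
        = (pA + qA * αs ^ 2) * (α + βs) ^ 2 * βs ^ 2 := by ring
      _ ≤ (pA + qA * α ^ 2) * (αs + βs) ^ 2 * βs ^ 2 :=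
          mul_le_mul_of_nonneg_right key (sq_nonneg βs)
      _ = (pA + qA * α ^ 2) * βs ^ 2 * (αs + βs) ^ 2 := by ring
  · intro β hβ
    obtain ⟨hβ0', hβ1'⟩ := hβ
    have hsum' : 0 < αs + β := by linarith
    have keyid : (pD + qD * β ^ 2) * (αs + βs) ^ 2 - (pD + qD * βs ^ 2) * (αs + β) ^ 2
        = qD * αs * (αs + βs) * (β - βs) ^ 2 := by rw [hpDe]; ring
    have hpos : 0 ≤ qD * αs * (αs + βs) * (β - βs) ^ 2 := by positivity
    have key : (pD + qD * βs ^ 2) * (αs + β) ^ 2 ≤ (pD + qD * β ^ 2) * (αs + βs) ^ 2 := by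
      linarith
    have e1 : JD0 pD qD αs βs = (pD + qD * βs ^ 2) * αs ^ 2 / (αs + βs) ^ 2 := by
      simp only [JD0, JD]; field_simp; try ring
    have e2 : JD0 pD qD αs β = (pD + qD * β ^ 2) * αs ^ 2 / (αs + β) ^ 2 := by
      simp only [JD0, JD]; field_simp; try ring
    rw [e1, e2, div_le_div_iff₀ (by positivity) (by positivity)]
    calc (pD + qD * βs ^ 2) * αs ^ 2 * (αs + β) ^ 2
        = (pD + qD * βs ^ 2) * (αs + β) ^ 2 * αs ^ 2 := by ring
      _ ≤ (pD + qD * β ^ 2) * (αs + βs) ^ 2 * αs ^ 2 :=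
          mul_le_mul_of_nonneg_right key (sq_nonneg αs)
      _ = (pD + qD * β ^ 2) * αs ^ 2 * (αs + βs) ^ 2 := by ring
  · intro γ hγ
    obtain ⟨hγ0, hγ1⟩ := hγ
    have hfrac : βs / (αs + βs) = βs ^ 2 / (rD + βs ^ 2) := by
      rw [hαs]; field_simp; try ring
    have hK' : 1 / 2 + qI ≤ (βs / (αs + βs)) ^ 2 := by rw [hfrac]; exact hK
    simp only [JI]
    set K := (βs / (αs + βs)) ^ 2 with hKdef
    nlinarith [mul_nonneg (sub_nonneg.2 hγ1) (show (0:ℝ) ≤ K - 1 / 2 - qI by linarith),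
      mul_nonneg (mul_nonneg hγ0 (sub_nonneg.2 hγ1)) (show (0:ℝ) ≤ K - 1 / 2 by linarith)]
end

section
/- (Theorem 2, Scenario D, second kind of Nash equilibrium.) Assume r_A ≤ 1, r_A < r_D, and 0 ≤ q_I ≤ (1/(r_A + 1))² − 1/2. Then (r_A, 1, 1) is a Nash equilibrium of the game with objectives (J_A⁰, J_D⁰, J_I): J_A⁰(r_A,1) ≤ J_A⁰(α,1) for all α ∈ (0,1], J_D⁰(r_A,1) ≤ J_D⁰(r_A,β) for all β ∈ (0,1], and J_I(r_A,1,1) ≥ J_I(r_A,1,γ) for all γ ∈ [0,1]. -/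
/-- Theorem 2, Scenario D, second kind of Nash equilibrium. -/
theorem scenarioD_second_NE (pA pD pI qA qD qI rA rD : ℝ)
    (hpA : pA ∈ Set.Ioo (0:ℝ) 1) (hpD : pD ∈ Set.Ioo (0:ℝ) 1) (hpI : pI ∈ Set.Ioo (0:ℝ) 1)
    (hqA : 0 < qA) (hqD : 0 < qD) (hqI : 0 ≤ qI)
    (hrA : rA = pA / qA) (hrD : rD = pD / qD)
    (h1 : rA ≤ 1) (h2 : rA < rD)
    (h3 : qI ≤ (1 / (rA + 1)) ^ 2 - 1 / 2) :
    (∀ α ∈ Set.Ioc (0:ℝ) 1, JA0 pA qA rA 1 ≤ JA0 pA qA α 1) ∧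
    (∀ β ∈ Set.Ioc (0:ℝ) 1, JD0 pD qD rA 1 ≤ JD0 pD qD rA β) ∧
    (∀ γ ∈ Set.Icc (0:ℝ) 1, JI pI qI rA 1 γ ≤ JI pI qI rA 1 1) := by
  have hrA0 : 0 < rA := hrA ▸ div_pos hpA.1 hqA
  have hpAeq : pA = rA * qA := by rw [hrA]; field_simp
  have hpDeq : pD = rD * qD := by rw [hrD]; field_simp
  refine ⟨?_, ?_, ?_⟩
  · intro α hα
    have hα0 : 0 < α := hα.1
    simp only [JA0, JA]
    rw [hpAeq, div_pow, div_pow, mul_div_assoc', mul_div_assoc', div_le_div_iff₀ (by positivity) (by positivity)]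
    nlinarith [mul_nonneg (mul_nonneg hqA.le (by linarith : (0:ℝ) ≤ 1 + rA))
        (sq_nonneg (α - rA)), sq_nonneg (α - rA)]
  · intro β hβ
    have hβ0 : 0 < β := hβ.1
    have hβ1 : β ≤ 1 := hβ.2
    simp only [JD0, JD]
    rw [hpDeq, div_pow, div_pow, mul_div_assoc', mul_div_assoc', div_le_div_iff₀ (by positivity) (by positivity)]
    have hA : 0 ≤ qD * rA ^ 2 * ((1 - β) * (rD - rA) * (2 * rA + β + 1)) := by 
      have e1 : (0:ℝ) ≤ 1 - β := by linarith
      have e2 : (0:ℝ) ≤ rD - rA := by linarith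
      have e3 : (0:ℝ) ≤ 2 * rA + β + 1 := by linarith
      have e4 : (0:ℝ) ≤ 1 + rA := by linarith
      positivity
    have hB : 0 ≤ qD * rA ^ 2 * (rA * (1 - β) ^ 2 * (1 + rA)) := by 
      have e1 : (0:ℝ) ≤ 1 - β := by linarith
      have e2 : (0:ℝ) ≤ rD - rA := by linarith
      have e3 : (0:ℝ) ≤ 2 * rA + β + 1 := by linarith
      have e4 : (0:ℝ) ≤ 1 + rA := by linarith
      positivity
    nlinarith [hA, hB]
  · intro γ hγ
    have hγ0 : 0 ≤ γ := hγ.1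
    have hγ1 : γ ≤ 1 := hγ.2
    simp only [JI]
    set x := (1 / (rA + 1)) ^ 2 with hx
    have hkey : 0 ≤ (1 + γ) * (x - 1/2) - qI := by nlinarith [mul_nonneg hγ0 (by linarith : (0:ℝ) ≤ x - 1/2)]
    nlinarith [mul_nonneg (by linarith : (0:ℝ) ≤ 1 - γ) hkey]
end

section
/- (Table 3, first row: Nash equilibria with γ* = 0 and interior strategies.) Assume r_A = r_D ≤ 1. Let β* ∈ [r_D, 1] satisfy ((β*)²/(r_D + (β*)²))² ≤ 1/2 + q_I, and set α* = r_D/β*. Then α* ∈ (0,1] and (α*, β*, 0) is a Nash equilibrium of the game with objectives (J_A, J_D, J_I): J_A(α*,β*,0) ≤ J_A(α,β*,0) for all α ∈ (0,1], J_D(α*,β*,0) ≤ J_D(α*,β,0) for all β ∈ (0,1], and J_I(α*,β*,0) ≥ J_I(α*,β*,γ) for all γ ∈ [0,1]. -/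
/-!
Without the insider both costs have the shape `(q a b + q x²) (b / (x + b))²` in the player's own
strategy `x`, and the cross-multiplied difference from the value at `x = a` is `q b³ (a + b) (x - a)²`.
So `α = p_A / (q_A β)` and `β = p_D / (q_D α)` are mutual best responses, and both hold exactly when
`α β = r_A = r_D`. The insider's gain from `γ > 0` is `γ² (s - 1/2) - q_I γ` with `s` the squared
success share `(β / (α + β))²`; it is nonpositive on `[0, 1]` as soon as `s ≤ 1/2 + q_I`.
-/

theorem quadratic_cost_le {q a b x : ℝ} (hq : 0 ≤ q) (hb : 0 ≤ b) (hab : 0 < a + b)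
    (hxb : 0 < x + b) :
    (q * (a * b) + q * a ^ 2) * (b / (a + b)) ^ 2 ≤ (q * (a * b) + q * x ^ 2) * (b / (x + b)) ^ 2 := by
  rw [div_pow, div_pow, mul_div_assoc', mul_div_assoc', div_le_div_iff₀ (by positivity) (by positivity)]
  have key : (q * (a * b) + q * x ^ 2) * b ^ 2 * (a + b) ^ 2
      - (q * (a * b) + q * a ^ 2) * b ^ 2 * (x + b) ^ 2 = q * b ^ 3 * (a + b) * (x - a) ^ 2 := by
    ring
  have : 0 ≤ q * b ^ 3 * (a + b) * (x - a) ^ 2 := by positivity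
  linarith

theorem JA_zero_le_of_eq_mul {p q α β : ℝ} (hp : p = q * (α * β)) (hq : 0 ≤ q) (hβ : 0 ≤ β)
    (hαβ : 0 < α + β) {α' : ℝ} (hα'β : 0 < α' + β) :
    JA p q α β 0 ≤ JA p q α' β 0 := by
  simpa [JA, hp] using quadratic_cost_le hq hβ hαβ hα'β

theorem JD_zero_le_of_eq_mul {p q α β : ℝ} (hp : p = q * (β * α)) (hq : 0 ≤ q) (hα : 0 ≤ α)
    (hαβ : 0 < α + β) {β' : ℝ} (hαβ' : 0 < α + β') :
    JD p q α β 0 ≤ JD p q α β' 0 := by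
  rw [add_comm] at hαβ hαβ'
  simpa [JD, hp, add_comm α] using quadratic_cost_le hq hα hαβ hαβ'

theorem JI_le_JI_zero {p q α β γ : ℝ} (hq : 0 ≤ q) (hγ : γ ∈ Set.Icc (0 : ℝ) 1)
    (hshare : (β / (α + β)) ^ 2 ≤ 1 / 2 + q) :
    JI p q α β γ ≤ JI p q α β 0 := by
  obtain ⟨hγ0, hγ1⟩ := hγ
  have hγsq : γ ^ 2 ≤ γ := by nlinarith
  have gain : JI p q α β γ - JI p q α β 0 = γ ^ 2 * ((β / (α + β)) ^ 2 - 1 / 2) - q * γ := by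
    simp only [JI]; ring
  have : γ ^ 2 * ((β / (α + β)) ^ 2 - 1 / 2) ≤ γ ^ 2 * q :=
    mul_le_mul_of_nonneg_left (by linarith) (sq_nonneg γ)
  nlinarith [mul_le_mul_of_nonneg_left hγsq hq]

theorem div_add_eq_sq_div_of_mul_eq {α β r : ℝ} (h : α * β = r) (hβ : β ≠ 0) :
    β / (α + β) = β ^ 2 / (r + β ^ 2) := by
  rw [← h, show α * β + β ^ 2 = (α + β) * β by ring, pow_two, mul_div_mul_right _ _ hβ]

theorem table3_first_row_general (pA pD pI qA qD qI rA rD : ℝ)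
    (hpD : pD ∈ Set.Ioo (0:ℝ) 1)
    (hqA : 0 < qA) (hqD : 0 < qD) (hqI : 0 ≤ qI)
    (hrA : rA = pA / qA) (hrD : rD = pD / qD)
    (h1 : rA = rD)
    (βs : ℝ) (hβs : βs ∈ Set.Icc rD 1)
    (hβcond : (βs ^ 2 / (rD + βs ^ 2)) ^ 2 ≤ 1 / 2 + qI)
    (αs : ℝ) (hαs : αs = rD / βs) :
    αs ∈ Set.Ioc (0:ℝ) 1 ∧
    (∀ α ∈ Set.Ioc (0:ℝ) 1, JA pA qA αs βs 0 ≤ JA pA qA α βs 0) ∧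
    (∀ β ∈ Set.Ioc (0:ℝ) 1, JD pD qD αs βs 0 ≤ JD pD qD αs β 0) ∧
    (∀ γ ∈ Set.Icc (0:ℝ) 1, JI pI qI αs βs γ ≤ JI pI qI αs βs 0) := by
  obtain ⟨hβlo, -⟩ := hβs
  have hrD_pos : 0 < rD := hrD ▸ div_pos hpD.1 hqD
  have hβs_pos : 0 < βs := hrD_pos.trans_le hβlo
  have hαs_pos : 0 < αs := hαs ▸ div_pos hrD_pos hβs_pos
  have hαβ : αs * βs = rD := by rw [hαs, div_mul_cancel₀ _ hβs_pos.ne']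
  have hpA : pA = qA * (αs * βs) := by rw [hαβ, ← h1, hrA, mul_div_cancel₀ _ hqA.ne']
  have hpD' : pD = qD * (βs * αs) := by rw [mul_comm βs, hαβ, hrD, mul_div_cancel₀ _ hqD.ne']
  refine ⟨⟨hαs_pos, hαs ▸ (div_le_one hβs_pos).2 hβlo⟩, ?_, ?_, ?_⟩
  · exact fun α hα => JA_zero_le_of_eq_mul hpA hqA.le hβs_pos.le (by positivity) (by linarith [hα.1])
  · exact fun β hβ => JD_zero_le_of_eq_mul hpD' hqD.le hαs_pos.le (by positivity) (by linarith [hβ.1])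
  · exact fun γ hγ => JI_le_JI_zero hqI hγ (div_add_eq_sq_div_of_mul_eq hαβ hβs_pos.ne' ▸ hβcond)

/-- Table 3, first row: Nash equilibria with γ* = 0 and interior strategies. -/
theorem table3_first_row (pA pD pI qA qD qI rA rD : ℝ)
    (hpA : pA ∈ Set.Ioo (0:ℝ) 1) (hpD : pD ∈ Set.Ioo (0:ℝ) 1) (hpI : pI ∈ Set.Ioo (0:ℝ) 1)
    (hqA : 0 < qA) (hqD : 0 < qD) (hqI : 0 ≤ qI)
    (hrA : rA = pA / qA) (hrD : rD = pD / qD)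
    (h1 : rA = rD) (h2 : rD ≤ 1)
    (βs : ℝ) (hβs : βs ∈ Set.Icc rD 1)
    (hβcond : (βs ^ 2 / (rD + βs ^ 2)) ^ 2 ≤ 1 / 2 + qI)
    (αs : ℝ) (hαs : αs = rD / βs) :
    αs ∈ Set.Ioc (0:ℝ) 1 ∧
    (∀ α ∈ Set.Ioc (0:ℝ) 1, JA pA qA αs βs 0 ≤ JA pA qA α βs 0) ∧
    (∀ β ∈ Set.Ioc (0:ℝ) 1, JD pD qD αs βs 0 ≤ JD pD qD αs β 0) ∧
    (∀ γ ∈ Set.Icc (0:ℝ) 1, JI pI qI αs βs γ ≤ JI pI qI αs βs 0) :=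
  table3_first_row_general pA pD pI qA qD qI rA rD hpD hqA hqD hqI hrA hrD h1 βs hβs hβcond αs hαs
end

section
/- (Table 3, second row.) Assume r_A ≤ 1, r_A < r_D, and q_I ≥ (1/(r_A + 1))² − 1/2. Then (r_A, 1, 0) is a Nash equilibrium of the game with objectives (J_A, J_D, J_I): J_A(r_A,1,0) ≤ J_A(α,1,0) for all α ∈ (0,1], J_D(r_A,1,0) ≤ J_D(r_A,β,0) for all β ∈ (0,1], and J_I(r_A,1,0) ≥ J_I(r_A,1,γ) for all γ ∈ [0,1]. -/
/- With no insider help the attacker minimises `(p + q α²) β² / (α + β)²`, whose only critical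
point is `q α β = p`; the defender's cost `(p + q β²) α² / (α + β)²` has the same shape, so it
decreases in `β` up to `p / (q α)`, which exceeds `1` exactly when `r_A < r_D`. The insider's gain
from `γ` over `γ = 0` is `γ (γ (s² - 1/2) - q_I)` with `s = β / (α + β)`, which is `≤ 0` on `[0, 1]`
once `q_I ≥ max 0 (s² - 1/2)`. -/

theorem JA_zero_isMinOn {p q β : ℝ} (hp : 0 ≤ p) (hq : 0 < q) (hβ : 0 < β) :
    IsMinOn (fun α => JA p q α β 0) (Set.Ioi 0) (p / (q * β)) := by
  intro α (hα : 0 < α)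
  set a := p / (q * β)
  have hpa : p = q * a * β := by simp only [a]; field_simp
  have key : 0 ≤ (p + q * α ^ 2) * (a + β) ^ 2 - (p + q * a ^ 2) * (α + β) ^ 2 := by
    rw [show (p + q * α ^ 2) * (a + β) ^ 2 - (p + q * a ^ 2) * (α + β) ^ 2
        = q * β * (a + β) * (a - α) ^ 2 by rw [hpa]; ring]
    positivity
  show JA p q a β 0 ≤ JA p q α β 0
  simp only [JA, sub_zero, one_pow, mul_one, ne_eq, OfNat.ofNat_ne_zero, not_false_eq_true,
    zero_pow, add_zero, div_pow]
  rw [← mul_div_assoc, ← mul_div_assoc, div_le_div_iff₀ (by positivity) (by positivity)]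
  nlinarith [mul_nonneg (sq_nonneg β) key]

theorem JD_zero_antitoneOn {p q α : ℝ} (hq : 0 < q) (hα : 0 < α) :
    AntitoneOn (fun β => JD p q α β 0) (Set.Ioc 0 (p / (q * α))) := by
  rintro β ⟨hβ, -⟩ b ⟨hb, hbp⟩ hβb
  rw [le_div_iff₀ (by positivity)] at hbp
  have key : 0 ≤ (p + q * β ^ 2) * (α + b) ^ 2 - (p + q * b ^ 2) * (α + β) ^ 2 := by
    rw [show (p + q * β ^ 2) * (α + b) ^ 2 - (p + q * b ^ 2) * (α + β) ^ 2
        = (b - β) * ((p - b * (q * α)) * (2 * α + b + β) + q * α * (α + b) * (b - β)) by ring]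
    have hβb' := sub_nonneg.2 hβb
    exact mul_nonneg hβb' (add_nonneg (mul_nonneg (sub_nonneg.2 hbp) (by positivity))
      (mul_nonneg (by positivity) hβb'))
  simp only [JD, sub_zero, one_pow, mul_one, ne_eq, OfNat.ofNat_ne_zero, not_false_eq_true,
    zero_pow, add_zero, div_pow]
  rw [← mul_div_assoc, ← mul_div_assoc, div_le_div_iff₀ (by positivity) (by positivity)]
  nlinarith [mul_nonneg (sq_nonneg α) key]

theorem JI_isMaxOn_zero {p q α β : ℝ} (hq : 0 ≤ q) (hqs : (β / (α + β)) ^ 2 - 1 / 2 ≤ q) :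
    IsMaxOn (fun γ => JI p q α β γ) (Set.Icc 0 1) 0 := by
  rintro γ ⟨hγ0, hγ1⟩
  show JI p q α β γ ≤ JI p q α β 0
  simp only [JI]
  nlinarith [mul_nonneg hq (mul_nonneg hγ0 (sub_nonneg.2 hγ1)),
    mul_nonneg (sq_nonneg γ) (sub_nonneg.2 hqs)]

theorem table3_second_row_general (pA pD pI qA qD qI rA rD : ℝ)
    (hpA : pA ∈ Set.Ioo (0:ℝ) 1)
    (hqA : 0 < qA) (hqD : 0 < qD) (hqI : 0 ≤ qI)
    (hrA : rA = pA / qA) (hrD : rD = pD / qD)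
    (h2 : rA < rD)
    (h3 : (1 / (rA + 1)) ^ 2 - 1 / 2 ≤ qI) :
    (∀ α ∈ Set.Ioc (0:ℝ) 1, JA pA qA rA 1 0 ≤ JA pA qA α 1 0) ∧
    (∀ β ∈ Set.Ioc (0:ℝ) 1, JD pD qD rA 1 0 ≤ JD pD qD rA β 0) ∧
    (∀ γ ∈ Set.Icc (0:ℝ) 1, JI pI qI rA 1 γ ≤ JI pI qI rA 1 0) := by
  have hrA0 : 0 < rA := hrA ▸ div_pos hpA.1 hqA
  have hrA_br : rA = pA / (qA * 1) := by rw [hrA, mul_one]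
  have h1D : 1 ≤ pD / (qD * rA) := by
    rw [hrD, lt_div_iff₀ hqD] at h2
    rw [le_div_iff₀ (by positivity)]
    linarith
  refine ⟨fun α hα => ?_, fun β hβ => ?_, fun γ hγ => ?_⟩
  · exact hrA_br ▸ JA_zero_isMinOn hpA.1.le hqA one_pos hα.1
  · exact JD_zero_antitoneOn hqD hrA0 ⟨hβ.1, hβ.2.trans h1D⟩ ⟨one_pos, h1D⟩ hβ.2
  · exact JI_isMaxOn_zero hqI h3 hγ

/-- Table 3, second row. -/
theorem table3_second_row (pA pD pI qA qD qI rA rD : ℝ)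
    (hpA : pA ∈ Set.Ioo (0:ℝ) 1) (hpD : pD ∈ Set.Ioo (0:ℝ) 1) (hpI : pI ∈ Set.Ioo (0:ℝ) 1)
    (hqA : 0 < qA) (hqD : 0 < qD) (hqI : 0 ≤ qI)
    (hrA : rA = pA / qA) (hrD : rD = pD / qD)
    (h1 : rA ≤ 1) (h2 : rA < rD)
    (h3 : (1 / (rA + 1)) ^ 2 - 1 / 2 ≤ qI) :
    (∀ α ∈ Set.Ioc (0:ℝ) 1, JA pA qA rA 1 0 ≤ JA pA qA α 1 0) ∧
    (∀ β ∈ Set.Ioc (0:ℝ) 1, JD pD qD rA 1 0 ≤ JD pD qD rA β 0) ∧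
    (∀ γ ∈ Set.Icc (0:ℝ) 1, JI pI qI rA 1 γ ≤ JI pI qI rA 1 0) :=
  table3_second_row_general pA pD pI qA qD qI rA rD hpA hqA hqD hqI hrA hrD h2 h3
end

section
/- (Table 3, third row.) Assume r_D ≤ 1 and r_D < r_A. Then (1, r_D, 0) is a Nash equilibrium of the game with objectives (J_A, J_D, J_I): J_A(1,r_D,0) ≤ J_A(α,r_D,0) for all α ∈ (0,1], J_D(1,r_D,0) ≤ J_D(1,β,0) for all β ∈ (0,1], and J_I(1,r_D,0) ≥ J_I(1,r_D,γ) for all γ ∈ [0,1]. -/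
/-!
At `γ = 0` each cost is a quadratic over `(α + β)²`. The attacker's cost
`(pA + qA α²) (β / (α + β))²` has derivative of the sign of `qA β α - pA`, so against `β = rD` it
decreases on all of `(0, 1]` because `qA rD < pA`; symmetrically the defender's cost against `α = 1`
is minimised exactly at `β = pD / qD = rD`. The insider gains `γ² (β / (α + β))²` at a cost of at
least `γ² / 2`, and `rD ≤ 1` makes the defender's share `rD / (1 + rD)` at most `1 / 2`.
-/

theorem JA_zero_antitoneOn {pA qA β : ℝ} (hqA : 0 < qA) (hβ : 0 < β) :
    AntitoneOn (fun α ↦ JA pA qA α β 0) (Set.Ioc 0 (pA / (qA * β))) := by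
  rintro α ⟨hα, -⟩ α' ⟨hα', hα'crit⟩ hαα'
  have hcrit : qA * β * α' ≤ pA := (le_div_iff₀' (by positivity)).1 hα'crit
  have hpA : 0 ≤ pA := le_trans (by positivity) hcrit
  have key : 0 ≤ pA * (α + α' + 2 * β) - qA * β * (2 * α * α' + β * (α + α')) := by
    refine nonneg_of_mul_nonneg_right (a := α') ?_ hα'
    nlinarith [mul_le_mul_of_nonneg_right hcrit (by positivity : 0 ≤ 2 * α * α' + β * (α + α')),
      mul_nonneg hpA (mul_nonneg (sub_nonneg.2 hαα') (by positivity : 0 ≤ α' + β))]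
  simp only [JA, sub_zero, one_pow, mul_one, zero_pow two_ne_zero, add_zero, div_pow]
  rw [← mul_div_assoc, ← mul_div_assoc, div_le_div_iff₀ (by positivity) (by positivity)]
  -- the cross-multiplied difference is `β² (α' - α)` times the expression in `key`
  nlinarith [mul_nonneg (mul_nonneg (sq_nonneg β) (sub_nonneg.2 hαα')) key]

theorem JD_zero_isMinOn {pD qD α : ℝ} (hpD : 0 ≤ pD) (hqD : 0 < qD) (hα : 0 < α) :
    IsMinOn (fun β ↦ JD pD qD α β 0) (Set.Ici 0) (pD / (qD * α)) := by
  refine isMinOn_iff.2 fun β (hβ : 0 ≤ β) ↦ ?_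
  set β₀ := pD / (qD * α)
  have hβ₀ : 0 ≤ β₀ := by positivity
  have hcrit : qD * α * β₀ = pD := mul_div_cancel₀ pD (by positivity)
  simp only [JD, sub_zero, one_pow, mul_one, zero_pow two_ne_zero, add_zero, div_pow]
  rw [← mul_div_assoc, ← mul_div_assoc, div_le_div_iff₀ (by positivity) (by positivity), ← hcrit]
  -- the cross-multiplied difference is `α² · qD α (α + β₀) (β - β₀)²`
  nlinarith [mul_nonneg (mul_nonneg (sq_nonneg α) (mul_pos hqD hα).le)
    (mul_nonneg (by positivity : 0 ≤ α + β₀) (sq_nonneg (β - β₀)))]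

theorem JI_isMaxOn_zero_s17 {pI qI α β : ℝ} (hqI : 0 ≤ qI) (hβ : (β / (α + β)) ^ 2 ≤ 1 / 2) :
    IsMaxOn (fun γ ↦ JI pI qI α β γ) (Set.Ici 0) 0 := by
  refine isMaxOn_iff.2 fun γ (hγ : 0 ≤ γ) ↦ ?_
  simp only [JI]
  nlinarith [mul_le_mul_of_nonneg_left hβ (sq_nonneg γ), mul_nonneg hqI hγ]

theorem div_add_self_le_half {α β : ℝ} (hα : 0 < α) (hβ : 0 ≤ β) (hβα : β ≤ α) :
    β / (α + β) ≤ 1 / 2 := by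
  rw [div_le_iff₀ (by positivity)]
  linarith

theorem table3_third_row_general (pA pD pI qA qD qI rA rD : ℝ)
    (hpD : pD ∈ Set.Ioo (0:ℝ) 1)
    (hqA : 0 < qA) (hqD : 0 < qD) (hqI : 0 ≤ qI)
    (hrA : rA = pA / qA) (hrD : rD = pD / qD)
    (h1 : rD ≤ 1) (h2 : rD < rA) :
    (∀ α ∈ Set.Ioc (0:ℝ) 1, JA pA qA 1 rD 0 ≤ JA pA qA α rD 0) ∧
    (∀ β ∈ Set.Ioc (0:ℝ) 1, JD pD qD 1 rD 0 ≤ JD pD qD 1 β 0) ∧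
    (∀ γ ∈ Set.Icc (0:ℝ) 1, JI pI qI 1 rD γ ≤ JI pI qI 1 rD 0) := by
  have hrD_pos : 0 < rD := hrD ▸ div_pos hpD.1 hqD
  have hone : (1 : ℝ) ∈ Set.Ioc 0 (pA / (qA * rD)) := by
    refine ⟨one_pos, (one_le_div₀ (by positivity)).2 ?_⟩
    rw [hrA, lt_div_iff₀ hqA] at h2
    linarith
  have hrD_crit : rD = pD / (qD * 1) := by rw [mul_one, hrD]
  have hshare : (rD / (1 + rD)) ^ 2 ≤ 1 / 2 := by
    calc (rD / (1 + rD)) ^ 2 ≤ (1 / 2) ^ 2 :=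
          pow_le_pow_left₀ (by positivity) (div_add_self_le_half one_pos hrD_pos.le h1) 2
      _ ≤ 1 / 2 := by norm_num
  refine ⟨fun α hα ↦ ?_, fun β hβ ↦ ?_, fun γ hγ ↦ ?_⟩
  · exact JA_zero_antitoneOn hqA hrD_pos ⟨hα.1, hα.2.trans hone.2⟩ hone hα.2
  · rw [hrD_crit]
    exact isMinOn_iff.1 (JD_zero_isMinOn hpD.1.le hqD one_pos) β hβ.1.le
  · exact isMaxOn_iff.1 (JI_isMaxOn_zero_s17 hqI hshare) γ hγ.1

/-- Table 3, third row. -/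
theorem table3_third_row (pA pD pI qA qD qI rA rD : ℝ)
    (hpA : pA ∈ Set.Ioo (0:ℝ) 1) (hpD : pD ∈ Set.Ioo (0:ℝ) 1) (hpI : pI ∈ Set.Ioo (0:ℝ) 1)
    (hqA : 0 < qA) (hqD : 0 < qD) (hqI : 0 ≤ qI)
    (hrA : rA = pA / qA) (hrD : rD = pD / qD)
    (h1 : rD ≤ 1) (h2 : rD < rA) :
    (∀ α ∈ Set.Ioc (0:ℝ) 1, JA pA qA 1 rD 0 ≤ JA pA qA α rD 0) ∧
    (∀ β ∈ Set.Ioc (0:ℝ) 1, JD pD qD 1 rD 0 ≤ JD pD qD 1 β 0) ∧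
    (∀ γ ∈ Set.Icc (0:ℝ) 1, JI pI qI 1 rD γ ≤ JI pI qI 1 rD 0) :=
  table3_third_row_general pA pD pI qA qD qI rA rD hpD hqA hqD hqI hrA hrD h1 h2
end

section
/- (Table 3, fourth row.) Assume r_A > 1 and r_D > 1. Then (1, 1, 0) is a Nash equilibrium of the game with objectives (J_A, J_D, J_I): J_A(1,1,0) ≤ J_A(α,1,0) for all α ∈ (0,1], J_D(1,1,0) ≤ J_D(1,β,0) for all β ∈ (0,1], and J_I(1,1,0) ≥ J_I(1,1,γ) for all γ ∈ [0,1]. -/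
/-- Table 3, fourth row. -/
theorem table3_fourth_row (pA pD pI qA qD qI rA rD : ℝ)
    (hpA : pA ∈ Set.Ioo (0:ℝ) 1) (hpD : pD ∈ Set.Ioo (0:ℝ) 1) (hpI : pI ∈ Set.Ioo (0:ℝ) 1)
    (hqA : 0 < qA) (hqD : 0 < qD) (hqI : 0 ≤ qI)
    (hrA : rA = pA / qA) (hrD : rD = pD / qD)
    (h1 : 1 < rA) (h2 : 1 < rD) :
    (∀ α ∈ Set.Ioc (0:ℝ) 1, JA pA qA 1 1 0 ≤ JA pA qA α 1 0) ∧
    (∀ β ∈ Set.Ioc (0:ℝ) 1, JD pD qD 1 1 0 ≤ JD pD qD 1 β 0) ∧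
    (∀ γ ∈ Set.Icc (0:ℝ) 1, JI pI qI 1 1 γ ≤ JI pI qI 1 1 0) := by
  have hA : qA < pA := by
    rw [hrA, lt_div_iff₀ hqA] at h1; linarith
  have hD : qD < pD := by
    rw [hrD, lt_div_iff₀ hqD] at h2; linarith
  refine ⟨?_, ?_, ?_⟩
  · rintro α ⟨hα0, hα1⟩
    simp only [JA]
    have h : (0:ℝ) < α + 1 := by linarith
    rw [div_pow, div_pow, ← mul_div_assoc, ← mul_div_assoc, div_le_div_iff₀ (by positivity) (by positivity)]
    nlinarith [mul_nonneg (mul_nonneg (sub_nonneg.2 hα1) hα0.le) (sub_nonneg.2 hA.le),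
      mul_nonneg (sq_nonneg (1 - α)) (by linarith : (0:ℝ) ≤ 3 * pA - qA)]
  · rintro β ⟨hβ0, hβ1⟩
    simp only [JD]
    have h : (0:ℝ) < 1 + β := by linarith
    rw [div_pow, div_pow, ← mul_div_assoc, ← mul_div_assoc, div_le_div_iff₀ (by positivity) (by positivity)]
    nlinarith [mul_nonneg (mul_nonneg (sub_nonneg.2 hβ1) hβ0.le) (sub_nonneg.2 hD.le),
      mul_nonneg (sq_nonneg (1 - β)) (by linarith : (0:ℝ) ≤ 3 * pD - qD)]
  · rintro γ ⟨hγ0, hγ1⟩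
    simp only [JI]
    nlinarith [mul_nonneg hqI hγ0, sq_nonneg γ]
end

section
/- (Defender's equilibrium cost comparison between malicious and inadvertent insider threats.) Let p_D ∈ (0,1), q_D > 0, r_D = p_D/q_D, and β ∈ (0,1]. (i) If α₁ = r_D/(p_D β), then J_D(α₁, β, 1) = 1/(1 + q_D β²). (ii) If α₂ = r_D/β, then J_D(α₂, β, 0) = p_D²/(p_D + q_D β²). (iii) Moreover p_D²/(p_D + q_D β²) < 1/(1 + q_D β²); i.e., at equilibria with the same defense strategy β, the malicious insider threat (γ* = 1, with α·β = r_D/p_D) costs the defender strictly more than the inadvertent insider threat (γ* = 0, with α·β = r_D). -/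
/-- Defender's equilibrium cost comparison between malicious and
    inadvertent insider threats. -/
theorem defender_cost_comparison (pD qD rD β : ℝ)
    (hpD : pD ∈ Set.Ioo (0:ℝ) 1) (hqD : 0 < qD) (hrD : rD = pD / qD)
    (hβ : β ∈ Set.Ioc (0:ℝ) 1)
    (α₁ α₂ : ℝ) (hα₁ : α₁ = rD / (pD * β)) (hα₂ : α₂ = rD / β) :
    JD pD qD α₁ β 1 = 1 / (1 + qD * β ^ 2) ∧
    JD pD qD α₂ β 0 = pD ^ 2 / (pD + qD * β ^ 2) ∧
    pD ^ 2 / (pD + qD * β ^ 2) < 1 / (1 + qD * β ^ 2) := by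
  obtain ⟨hp0, hp1⟩ := hpD
  obtain ⟨hβ0, hβ1⟩ := hβ
  have hqβ : 0 < qD * β ^ 2 := by positivity
  have h1 : (0:ℝ) < 1 + qD * β ^ 2 := by linarith
  have h2 : (0:ℝ) < pD + qD * β ^ 2 := by linarith
  have hα1 : α₁ = 1 / (qD * β) := by
    rw [hα₁, hrD]; field_simp
  have hα2 : α₂ = pD / (qD * β) := by
    rw [hα₂, hrD]; field_simp
  have hs1 : α₁ + β = (1 + qD * β ^ 2) / (qD * β) := by
    rw [hα1]; field_simp
  have hs2 : α₂ + β = (pD + qD * β ^ 2) / (qD * β) := by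
    rw [hα2]; field_simp
  refine ⟨?_, ?_, ?_⟩
  · rw [JD, hs1, hα1]
    field_simp
    ring
  · rw [JD, hs2, hα2]
    field_simp
    ring
  · rw [div_lt_div_iff₀ h2 h1]
    nlinarith [sq_nonneg pD, mul_pos hp0 hqβ]
end
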